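/- Let the data (a_1,…,a_n) with labels (y_1,…,y_n) be separable with margin μ > 0, and let R := max_{i∈[n]} ‖a_i‖. Fix any step size γ > 0 and consider the Normalized LR+GD iterates θ₀ = 0, θ_{t+1} = θ_t − γ β(θ_t) ∇f(θ_t). Then there exists t with 0 ≤ t ≤ R²/μ² + 2 log(2n − 1)/(γ μ²) such that y_i a_iᵀθ_t > 0 for all i ∈ [n]; i.e., Normalized LR+GD solves the classification task after at most R²/μ² + 2 log(2n − 1)/(γ μ²) iterations. -/

import Mathlib

open scoped RealInnerProductSpace BigOperators

/-- The gradient of the logistic loss `f(θ) = (1/n) Σ_i log(1 + exp(-y_i aᵢᵀθ))`. -/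
noncomputable def logisticGrad {d n : ℕ} (a : Fin n → EuclideanSpace ℝ (Fin d))
    (y : Fin n → ℝ) (θ : EuclideanSpace ℝ (Fin d)) : EuclideanSpace ℝ (Fin d) :=
  -(((1 : ℝ) / n) • ∑ i, ((1 + Real.exp (y i * ⟪a i, θ⟫))⁻¹ * y i) • a i)

/-- The normalization factor `β(θ) = ((1/n) Σ_i (1 + exp(y_i aᵢᵀθ))⁻¹)⁻¹`. -/
noncomputable def logisticBeta {d n : ℕ} (a : Fin n → EuclideanSpace ℝ (Fin d))
    (y : Fin n → ℝ) (θ : EuclideanSpace ℝ (Fin d)) : ℝ :=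
  (((1 : ℝ) / n) * ∑ i, (1 + Real.exp (y i * ⟪a i, θ⟫))⁻¹)⁻¹

/-!
The normalized step is `θ_{t+1} = θ_t + γ w_t`, where `w_t` is the average of the vectors
`y_i a_i` weighted by `σ(-y_i aᵢᵀθ_t)`. As a convex combination, `w_t` has margin
`⟪w_t, θ*⟫ ≥ μ` and norm at most `R`; and while some sample is misclassified, Jensen's inequality
for `log` gives `⟪θ_t, w_t⟫ ≤ log (2n - 1)`. As in Novikoff's perceptron bound, `⟪θ_t, θ*⟫ ≥ tγμ`
then grows linearly while `‖θ_t‖² ≤ t (2γ log (2n - 1) + γ²R²)`, which caps the number of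
misclassifying steps.
-/

open Finset Real

theorem centerMass_sigmoid_neg_le_log {ι : Type*} [Fintype ι] (z : ι → ℝ) {j : ι}
    (hj : z j ≤ 0) :
    univ.centerMass (fun i => sigmoid (-z i)) z ≤ log (2 * Fintype.card ι - 1) := by
  set s := fun i => sigmoid (-z i)
  have hs_nonneg : ∀ i ∈ univ, 0 ≤ s i := fun i _ => sigmoid_nonneg _
  have hS_half : 1 / 2 ≤ ∑ i, s i :=
    calc (1 : ℝ) / 2 = sigmoid 0 := by simp
      _ ≤ s j := sigmoid_le (by linarith)
      _ ≤ ∑ i, s i := single_le_sum hs_nonneg (mem_univ j)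
  have hS_pos : 0 < ∑ i, s i := by linarith
  have hexp : univ.centerMass s (fun i => exp (z i)) = Fintype.card ι / ∑ i, s i - 1 := by
    have hmul : ∀ i, s i • exp (z i) = 1 - s i := fun i => by
      simpa [s, sigmoid_neg] using sigmoid_mul_rexp_neg (-z i)
    simp only [centerMass, hmul, sum_sub_distrib, sum_const, card_univ, smul_eq_mul,
      nsmul_eq_mul, mul_one]
    field_simp
  calc univ.centerMass s z = univ.centerMass s (log ∘ fun i => exp (z i)) := by
        simp only [Function.comp_def, log_exp]
    _ ≤ log (univ.centerMass s fun i => exp (z i)) :=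
        strictConcaveOn_log_Ioi.concaveOn.le_map_centerMass hs_nonneg hS_pos
          fun i _ => exp_pos (z i)
    _ ≤ log (2 * Fintype.card ι - 1) := by
        refine log_le_log ((convex_Ioi (0 : ℝ)).centerMass_mem hs_nonneg hS_pos
          fun i _ => Set.mem_Ioi.2 (exp_pos (z i))) ?_
        rw [hexp, sub_le_sub_iff_right, div_le_iff₀ hS_pos]
        nlinarith [(Fintype.card ι).cast_nonneg (α := ℝ)]

section Perceptron

variable {E : Type*} [NormedAddCommGroup E] [InnerProductSpace ℝ E] {θ w : ℕ → E} {γ : ℝ}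

theorem mul_le_inner_of_step (hθ0 : θ 0 = 0) (hstep : ∀ t, θ (t + 1) = θ t + γ • w t)
    (hγ : 0 ≤ γ) {u : E} {μ : ℝ} (hwu : ∀ t, μ ≤ ⟪w t, u⟫) (t : ℕ) :
    t * (γ * μ) ≤ ⟪θ t, u⟫ := by
  induction t with
  | zero => simp [hθ0]
  | succ t ih =>
    rw [hstep, inner_add_left, real_inner_smul_left]
    push_cast
    linarith [mul_le_mul_of_nonneg_left (hwu t) hγ]

theorem norm_sq_le_of_step (hθ0 : θ 0 = 0) (hstep : ∀ t, θ (t + 1) = θ t + γ • w t)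
    (hγ : 0 ≤ γ) {R L : ℝ} (hwR : ∀ t, ‖w t‖ ≤ R) (t : ℕ)
    (hL : ∀ k < t, ⟪θ k, w k⟫ ≤ L) :
    ‖θ t‖ ^ 2 ≤ t * (2 * γ * L + γ ^ 2 * R ^ 2) := by
  induction t with
  | zero => simp [hθ0]
  | succ t ih =>
    have hw_sq : ‖w t‖ ^ 2 ≤ R ^ 2 := pow_le_pow_left₀ (norm_nonneg _) (hwR t) 2
    rw [hstep, norm_add_sq_real, real_inner_smul_right, norm_smul, mul_pow, norm_eq_abs, sq_abs]
    push_cast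
    linarith [ih fun k hk => hL k (hk.trans t.lt_succ_self),
      mul_le_mul_of_nonneg_left (hL t t.lt_succ_self) hγ,
      mul_le_mul_of_nonneg_left hw_sq (sq_nonneg γ)]

theorem cast_le_of_step (hθ0 : θ 0 = 0) (hstep : ∀ t, θ (t + 1) = θ t + γ • w t)
    (hγ : 0 < γ) {u : E} (hu : ‖u‖ ≤ 1) {μ R L : ℝ} (hμ : 0 < μ)
    (hwu : ∀ t, μ ≤ ⟪w t, u⟫) (hwR : ∀ t, ‖w t‖ ≤ R) (hL₀ : 0 ≤ L) (t : ℕ)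
    (hL : ∀ k < t, ⟪θ k, w k⟫ ≤ L) :
    (t : ℝ) ≤ R ^ 2 / μ ^ 2 + 2 * L / (γ * μ ^ 2) := by
  obtain rfl | ht := t.eq_zero_or_pos
  · simp only [Nat.cast_zero]; positivity
  have hθu : t * (γ * μ) ≤ ‖θ t‖ :=
    calc t * (γ * μ) ≤ ⟪θ t, u⟫ := mul_le_inner_of_step hθ0 hstep hγ.le hwu t
      _ ≤ ‖θ t‖ * ‖u‖ := real_inner_le_norm _ _
      _ ≤ ‖θ t‖ := mul_le_of_le_one_right (norm_nonneg _) hu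
  have hsq : t * (t * (γ ^ 2 * μ ^ 2)) ≤ t * (2 * γ * L + γ ^ 2 * R ^ 2) :=
    calc t * (t * (γ ^ 2 * μ ^ 2)) = (t * (γ * μ)) ^ 2 := by ring
      _ ≤ ‖θ t‖ ^ 2 := pow_le_pow_left₀ (by positivity) hθu 2
      _ ≤ t * (2 * γ * L + γ ^ 2 * R ^ 2) := norm_sq_le_of_step hθ0 hstep hγ.le hwR t hL
  have hT : R ^ 2 / μ ^ 2 + 2 * L / (γ * μ ^ 2) =
      (2 * γ * L + γ ^ 2 * R ^ 2) / (γ ^ 2 * μ ^ 2) := by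
    field_simp; ring
  rw [hT, le_div_iff₀ (by positivity)]
  exact le_of_mul_le_mul_left hsq (by exact_mod_cast ht)

theorem exists_le_of_step (hθ0 : θ 0 = 0) (hstep : ∀ t, θ (t + 1) = θ t + γ • w t)
    (hγ : 0 < γ) {u : E} (hu : ‖u‖ ≤ 1) {μ R L : ℝ} (hμ : 0 < μ)
    (hwu : ∀ t, μ ≤ ⟪w t, u⟫) (hwR : ∀ t, ‖w t‖ ≤ R) (hL₀ : 0 ≤ L) (P : ℕ → Prop)
    (hL : ∀ t, ¬P t → ⟪θ t, w t⟫ ≤ L) :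
    ∃ t : ℕ, (t : ℝ) ≤ R ^ 2 / μ ^ 2 + 2 * L / (γ * μ ^ 2) ∧ P t := by
  set T := R ^ 2 / μ ^ 2 + 2 * L / (γ * μ ^ 2)
  by_contra! hnot
  have hT : 0 ≤ T := by positivity
  have hN := cast_le_of_step hθ0 hstep hγ hu hμ hwu hwR hL₀ (⌊T⌋₊ + 1) fun k hk =>
    hL k <| hnot k <| (Nat.cast_le.2 (Nat.lt_succ_iff.1 hk)).trans (Nat.floor_le hT)
  exact (Nat.lt_floor_add_one T).not_ge (by exact_mod_cast hN)

end Perceptron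

theorem Finset.inner_centerMass {ι E : Type*} [NormedAddCommGroup E] [InnerProductSpace ℝ E]
    (t : Finset ι) (w : ι → ℝ) (v : ι → E) (x : E) :
    ⟪x, t.centerMass w v⟫ = t.centerMass w fun i => ⟪x, v i⟫ := by
  simp only [centerMass, real_inner_smul_right, inner_sum, smul_eq_mul]

section LogisticDirection

variable {ι E : Type*} [Fintype ι] [NormedAddCommGroup E] [InnerProductSpace ℝ E]
  (a : ι → E) (y : ι → ℝ)

noncomputable def logisticDirection (θ : E) : E :=
  univ.centerMass (fun i => sigmoid (-(y i * ⟪a i, θ⟫))) fun i => y i • a i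

variable {a y}

theorem sum_sigmoid_pos [Nonempty ι] (z : ι → ℝ) : 0 < ∑ i, sigmoid (z i) :=
  sum_pos (fun _ _ => sigmoid_pos _) univ_nonempty

theorem le_inner_logisticDirection [Nonempty ι] {u : E} {μ : ℝ}
    (hmargin : ∀ i, μ ≤ y i * ⟪a i, u⟫) (θ : E) : μ ≤ ⟪logisticDirection a y θ, u⟫ := by
  rw [real_inner_comm, logisticDirection, inner_centerMass]
  refine (convex_Ici μ).centerMass_mem (fun i _ => sigmoid_nonneg _) (sum_sigmoid_pos _)
    fun i _ => ?_
  simpa [real_inner_smul_right, real_inner_comm] using hmargin i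

theorem norm_logisticDirection_le [Nonempty ι] {R : ℝ} (hy : ∀ i, |y i| ≤ 1)
    (ha : ∀ i, ‖a i‖ ≤ R) (θ : E) : ‖logisticDirection a y θ‖ ≤ R := by
  rw [← mem_closedBall_zero_iff]
  refine (convex_closedBall 0 R).centerMass_mem (fun i _ => sigmoid_nonneg _)
    (sum_sigmoid_pos _) fun i _ => ?_
  rw [mem_closedBall_zero_iff, norm_smul, norm_eq_abs]
  exact (mul_le_of_le_one_left (norm_nonneg _) (hy i)).trans (ha i)

theorem inner_logisticDirection_le_log {θ : E} {j : ι} (hj : y j * ⟪a j, θ⟫ ≤ 0) :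
    ⟪θ, logisticDirection a y θ⟫ ≤ log (2 * Fintype.card ι - 1) := by
  rw [logisticDirection, inner_centerMass]
  simpa only [real_inner_smul_right, real_inner_comm θ] using
    centerMass_sigmoid_neg_le_log (fun i => y i * ⟪a i, θ⟫) hj

end LogisticDirection

theorem smul_logisticGrad {d n : ℕ} [NeZero n] (a : Fin n → EuclideanSpace ℝ (Fin d))
    (y : Fin n → ℝ) (θ : EuclideanSpace ℝ (Fin d)) (γ : ℝ) :
    (γ * logisticBeta a y θ) • logisticGrad a y θ = -(γ • logisticDirection a y θ) := by
  have hs : ∀ i, (1 + exp (y i * ⟪a i, θ⟫))⁻¹ = sigmoid (-(y i * ⟪a i, θ⟫)) := fun i => by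
    rw [sigmoid_def, neg_neg]
  simp only [logisticGrad, logisticBeta, logisticDirection, centerMass, hs, smul_neg, smul_smul]
  have hn : (n : ℝ) ≠ 0 := Nat.cast_ne_zero.2 (NeZero.ne n)
  congr 2
  field_simp

theorem normalized_lr_gd_converges {d n : ℕ}
    (a : Fin n → EuclideanSpace ℝ (Fin d)) (y : Fin n → ℝ)
    (hy : ∀ i, y i = 1 ∨ y i = -1)
    (μ R : ℝ) (hμ : 0 < μ)
    (θstar : EuclideanSpace ℝ (Fin d)) (hstar : ‖θstar‖ = 1)
    (hmargin : ∀ i, μ ≤ y i * ⟪a i, θstar⟫)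
    (hR : IsGreatest (Set.range fun i => ‖a i‖) R)
    (γ : ℝ) (hγ : 0 < γ)
    (θ : ℕ → EuclideanSpace ℝ (Fin d))
    (h0 : θ 0 = 0)
    (hstep : ∀ t, θ (t + 1) = θ t - (γ * logisticBeta a y (θ t)) • logisticGrad a y (θ t)) :
    ∃ t : ℕ, (t : ℝ) ≤ R ^ 2 / μ ^ 2 + 2 * Real.log (2 * n - 1) / (γ * μ ^ 2) ∧
      ∀ i, 0 < y i * ⟪a i, θ t⟫ := by
  obtain ⟨i₀, -⟩ := hR.1
  have : NeZero n := ⟨i₀.pos.ne'⟩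
  have hn : (1 : ℝ) ≤ n := by exact_mod_cast i₀.pos
  refine exists_le_of_step (w := fun t => logisticDirection a y (θ t)) h0 (fun t => ?_) hγ
    hstar.le hμ (fun t => le_inner_logisticDirection hmargin (θ t))
    (fun t => norm_logisticDirection_le (fun i => ?_) (fun i => hR.2 ⟨i, rfl⟩) (θ t))
    (log_nonneg (by linarith)) _ fun t hmis => ?_
  · rw [hstep, smul_logisticGrad, sub_neg_eq_add]
  · rcases hy i with h | h <;> simp [h]
  · obtain ⟨j, hj⟩ := not_forall.1 hmis
    simpa using inner_logisticDirection_le_log (not_lt.1 hj)
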